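/- Consider the M-FSIG with fixed N, K = N, channel gains satisfying |h_{m,n,k}| > 0 for all m, n, k, powers P_n > 0, noise N0 > 0, and weights w_n > 0, and suppose the set P_e of pure Nash equilibria is nonempty. Let ã ∈ P_e attain min_{a ∈ P_e} W(a) and let S_ã be its set of sharing users. Then min_{a ∈ P_e} W(a) / max_{a ∈ {1,…,K}^N} W(a) ≥ [Σ_{n ∉ S_ã} w_n·log₂(1 + (P_n/N0)·|h_{n,n,(K−M+1)}|²)] / [Σ_{n=1}^N w_n·log₂(1 + (P_n/N0)·|h_{n,n,(K)}|²)]. -/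

import Mathlib

open MeasureTheory ProbabilityTheory Filter

/-- The cumulative distribution function of a real random variable `X` under `μ`. -/
noncomputable def cdfOf {Ω : Type*} [MeasurableSpace Ω] (μ : Measure Ω) (X : Ω → ℝ) : ℝ → ℝ :=
  fun x => (μ {ω | X ω ≤ x}).toReal

/-- `orderStat v j` is the `j`-th smallest value (1-indexed) among `v 0, …, v (K-1)`. -/
noncomputable def orderStat {K : ℕ} (v : Fin K → ℝ) (j : ℕ) : ℝ :=
  ((Finset.univ.val.map v).sort (· ≤ ·)).getD (j - 1) 0

/-- A finite family of random variables is `m`-dependent: every subfamily whose indices are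
pairwise more than `m` apart is jointly independent. -/
def MDepFam {Ω β : Type*} [MeasurableSpace Ω] [MeasurableSpace β] (μ : Measure Ω) (m : ℕ)
    {K : ℕ} (X : Fin K → Ω → β) : Prop :=
  ∀ S : Finset (Fin K),
    (∀ i ∈ S, ∀ j ∈ S, i ≠ j → (m : ℤ) < |(i : ℤ) - (j : ℤ)|) →
    iIndepFun (fun i : S => X i.1) μ

/-- `F` has an exponentially-dominated tail with parameters `(α, β, lam, γ)`:
`(1 - F x)/(α x^β e^{-lam x^γ}) → 1` as `x → ∞`. -/
def ExpDomTail (F : ℝ → ℝ) (α β lam γ : ℝ) : Prop :=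
  Tendsto (fun x : ℝ => (1 - F x) / (α * x ^ β * Real.exp (-lam * x ^ γ))) atTop (nhds 1)

/-- Interference experienced by user `n` on RE `k` under the profile `a`. -/
noncomputable def interf {N : ℕ} (h : Fin N → Fin N → Fin N → ℂ) (P : Fin N → ℝ)
    (a : Fin N → Fin N) (n k : Fin N) : ℝ :=
  ∑ m ∈ Finset.univ.filter (fun m => m ≠ n ∧ a m = k), ‖h m n k‖ ^ 2 * P m

/-- Achievable rate of user `n` under the profile `a`, treating interference as noise. -/
noncomputable def rate {N : ℕ} (h : Fin N → Fin N → Fin N → ℂ) (P : Fin N → ℝ) (N0 : ℝ)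
    (a : Fin N → Fin N) (n : Fin N) : ℝ :=
  Real.logb 2 (1 + P n * ‖h n n (a n)‖ ^ 2 / (N0 + interf h P a n (a n)))

/-- Pure Nash equilibrium of the game with utilities `u` (utility of user `n` at profile `a`
is `u a n`). -/
def IsPNE {N : ℕ} (u : (Fin N → Fin N) → Fin N → ℝ) (a : Fin N → Fin N) : Prop :=
  ∀ n k, u (Function.update a n k) n ≤ u a n

/-- The M-FSIG utility of user `n` at profile `a`. -/
noncomputable def mfsigUtil {N : ℕ} (h : Fin N → Fin N → Fin N → ℂ) (P : Fin N → ℝ)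
    (N0 : ℝ) (M : ℕ) (a : Fin N → Fin N) (n : Fin N) : ℝ :=
  if orderStat (fun k => ‖h n n k‖) (N - M + 1) ≤ ‖h n n (a n)‖ then
    Real.logb 2 (1 + P n * orderStat (fun k => ‖h n n k‖) (N - M + 1) ^ 2 /
      (N0 + interf h P a n (a n)))
  else 0

/-- Weighted sum-rate `W(a) = ∑ n, w n * R n (a)`. -/
noncomputable def wsum {N : ℕ} (h : Fin N → Fin N → Fin N → ℂ) (P : Fin N → ℝ) (N0 : ℝ)
    (w : Fin N → ℝ) (a : Fin N → Fin N) : ℝ :=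
  ∑ n, w n * rate h P N0 a n

/-- Number of sharing users of a profile `a`. -/
noncomputable def numSharing {N : ℕ} (a : Fin N → Fin N) : ℕ :=
  (Finset.univ.filter fun n => ∃ m, m ≠ n ∧ a m = a n).card

/-!
At a pure Nash equilibrium of the M-FSIG every user transmits on an RE whose gain is at least the
threshold `|h_{n,n,(K-M+1)}|`: otherwise its utility is `0`, while moving to the RE attaining the
threshold yields a positive utility. A non-sharing user suffers no interference, so its rate is at
least `log₂ (1 + P_n/N0 · |h_{n,n,(K-M+1)}|²)`, and the sharing users contribute nonnegatively.
On the other hand every rate is at most `log₂ (1 + P_n/N0 · |h_{n,n,(K)}|²)`. Hence the numerator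
is at most `W(ã) ≤ sup W`, and `sup W` is at most the denominator.
-/

lemma orderStat_eq_zero_or_exists {K : ℕ} (v : Fin K → ℝ) (j : ℕ) :
    orderStat v j = 0 ∨ ∃ k, v k = orderStat v j := by
  unfold orderStat
  set l := (Finset.univ.val.map v).sort (· ≤ ·)
  by_cases hj : j - 1 < l.length
  · obtain ⟨k, -, hk⟩ := Multiset.mem_map.mp ((Multiset.mem_sort _).mp (List.getElem_mem hj))
    exact Or.inr ⟨k, by rw [hk, List.getD_eq_getElem]⟩
  · exact Or.inl (List.getD_eq_default _ _ (not_lt.mp hj))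

lemma orderStat_nonneg {K : ℕ} {v : Fin K → ℝ} (hv : ∀ k, 0 ≤ v k) (j : ℕ) :
    0 ≤ orderStat v j := by
  obtain hj | ⟨k, hk⟩ := orderStat_eq_zero_or_exists v j
  · exact hj.ge
  · exact hk ▸ hv k

lemma le_orderStat_top {K : ℕ} (v : Fin K → ℝ) (k : Fin K) : v k ≤ orderStat v K := by
  set l := (Finset.univ.val.map v).sort (· ≤ ·) with hl
  have hK : 0 < K := k.pos
  have hlen : l.length = K := by simp [l]
  have hmem : v k ∈ l := by
    rw [hl, Multiset.mem_sort, Multiset.mem_map]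
    exact ⟨k, Finset.mem_univ_val _, rfl⟩
  obtain ⟨i, hi⟩ := List.mem_iff_get.mp hmem
  have hsorted : l.Pairwise (· ≤ ·) := Multiset.pairwise_sort _ _
  have hlast : l.get i ≤ l.get ⟨K - 1, by omega⟩ :=
    hsorted.rel_get_of_le (by simp only [Fin.le_def]; omega)
  rw [orderStat, ← hl, List.getD_eq_getElem _ _ (by omega), ← hi]
  simpa using hlast

lemma div_le_div_of_le_of_le_of_le {a b c d : ℝ} (ha : 0 ≤ a) (hac : a ≤ c) (hcd : c ≤ d)
    (hdb : d ≤ b) : a / b ≤ c / d := by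
  rcases (ha.trans (hac.trans hcd)).lt_or_eq with hd | rfl
  · exact div_le_div₀ (ha.trans hac) hac hd hdb
  · obtain rfl : a = 0 := le_antisymm (hac.trans hcd) ha
    simp

section Game

variable {N : ℕ} (h : Fin N → Fin N → Fin N → ℂ) {P : Fin N → ℝ} {N0 : ℝ}

lemma interf_nonneg (hP : ∀ n, 0 ≤ P n) (a : Fin N → Fin N) (n k : Fin N) :
    0 ≤ interf h P a n k :=
  Finset.sum_nonneg fun m _ => mul_nonneg (sq_nonneg _) (hP m)

lemma interf_self_eq_zero_of_not_sharing (P : Fin N → ℝ) {a : Fin N → Fin N} {n : Fin N}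
    (hn : ¬ ∃ m, m ≠ n ∧ a m = a n) : interf h P a n (a n) = 0 := by
  rw [interf, Finset.filter_false_of_mem fun m _ hm => hn ⟨m, hm⟩, Finset.sum_empty]

lemma rate_nonneg (hP : ∀ n, 0 ≤ P n) (hN0 : 0 < N0) (a : Fin N → Fin N) (n : Fin N) :
    0 ≤ rate h P N0 a n :=
  Real.logb_nonneg one_lt_two <| le_add_of_nonneg_right <|
    div_nonneg (mul_nonneg (hP n) (sq_nonneg _)) (hN0.le.trans (le_add_of_nonneg_right
      (interf_nonneg h hP a n (a n))))

lemma rate_le_logb_orderStat_top (hP : ∀ n, 0 ≤ P n) (hN0 : 0 < N0) (a : Fin N → Fin N)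
    (n : Fin N) :
    rate h P N0 a n ≤ Real.logb 2 (1 + P n / N0 * orderStat (fun k => ‖h n n k‖) N ^ 2) := by
  have hI := interf_nonneg h hP a n (a n)
  have hgain : ‖h n n (a n)‖ ≤ orderStat (fun k => ‖h n n k‖) N :=
    le_orderStat_top (fun k => ‖h n n k‖) (a n)
  have hsnr : P n * ‖h n n (a n)‖ ^ 2 / (N0 + interf h P a n (a n)) ≤
      P n / N0 * orderStat (fun k => ‖h n n k‖) N ^ 2 := by
    rw [div_mul_eq_mul_div]
    exact div_le_div₀ (mul_nonneg (hP n) (sq_nonneg _))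
      (mul_le_mul_of_nonneg_left (pow_le_pow_left₀ (norm_nonneg _) hgain 2) (hP n)) hN0
      (le_add_of_nonneg_right hI)
  refine Real.logb_le_logb_of_le one_lt_two (add_pos_of_pos_of_nonneg one_pos ?_) (by linarith)
  exact div_nonneg (mul_nonneg (hP n) (sq_nonneg _)) (by linarith)

lemma orderStat_le_of_isPNE {M : ℕ} (hP : ∀ n, 0 < P n) (hN0 : 0 < N0) {a : Fin N → Fin N}
    (ha : IsPNE (mfsigUtil h P N0 M) a) (n : Fin N) :
    orderStat (fun k => ‖h n n k‖) (N - M + 1) ≤ ‖h n n (a n)‖ := by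
  set s := orderStat (fun k => ‖h n n k‖) (N - M + 1)
  obtain hs | ⟨k, hk⟩ := orderStat_eq_zero_or_exists (fun k => ‖h n n k‖) (N - M + 1)
  · exact hs.trans_le (norm_nonneg _)
  by_contra hlt
  have hs : 0 < s := (norm_nonneg _).trans_lt (not_le.mp hlt)
  have hstay : mfsigUtil h P N0 M a n = 0 := if_neg hlt
  have hmove : 0 < mfsigUtil h P N0 M (Function.update a n k) n := by
    rw [mfsigUtil, Function.update_self, if_pos hk.ge]
    have hI := interf_nonneg h (fun m => (hP m).le) (Function.update a n k) n k
    exact Real.logb_pos one_lt_two <| lt_add_of_pos_right _ <|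
      div_pos (mul_pos (hP n) (pow_pos hs 2)) (add_pos_of_pos_of_nonneg hN0 hI)
  linarith [ha n k]

lemma logb_orderStat_le_rate_of_isPNE {M : ℕ} (hP : ∀ n, 0 < P n) (hN0 : 0 < N0)
    {a : Fin N → Fin N} (ha : IsPNE (mfsigUtil h P N0 M) a) {n : Fin N}
    (hn : ¬ ∃ m, m ≠ n ∧ a m = a n) :
    Real.logb 2 (1 + P n / N0 * orderStat (fun k => ‖h n n k‖) (N - M + 1) ^ 2) ≤
      rate h P N0 a n := by
  have hs0 := orderStat_nonneg (fun k => norm_nonneg (h n n k)) (N - M + 1)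
  have hs := orderStat_le_of_isPNE h hP hN0 ha n
  rw [rate, interf_self_eq_zero_of_not_sharing h P hn, add_zero]
  have hsnr : 0 ≤ P n / N0 * orderStat (fun k => ‖h n n k‖) (N - M + 1) ^ 2 :=
    mul_nonneg (div_nonneg (hP n).le hN0.le) (sq_nonneg _)
  refine Real.logb_le_logb_of_le one_lt_two (add_pos_of_pos_of_nonneg one_pos hsnr) ?_
  rw [div_mul_eq_mul_div]
  gcongr
  exact (hP n).le

variable {w : Fin N → ℝ}

lemma sum_not_sharing_le_wsum_of_isPNE (hw : ∀ n, 0 ≤ w n) {M : ℕ} (hP : ∀ n, 0 < P n)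
    (hN0 : 0 < N0) {a : Fin N → Fin N} (ha : IsPNE (mfsigUtil h P N0 M) a) :
    ∑ n ∈ Finset.univ.filter (fun n => ¬ ∃ m, m ≠ n ∧ a m = a n),
        w n * Real.logb 2 (1 + P n / N0 * orderStat (fun k => ‖h n n k‖) (N - M + 1) ^ 2) ≤
      wsum h P N0 w a :=
  calc _ ≤ ∑ n ∈ Finset.univ.filter (fun n => ¬ ∃ m, m ≠ n ∧ a m = a n),
          w n * rate h P N0 a n :=
        Finset.sum_le_sum fun n hn => mul_le_mul_of_nonneg_left
          (logb_orderStat_le_rate_of_isPNE h hP hN0 ha (Finset.mem_filter.mp hn).2) (hw n)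
    _ ≤ wsum h P N0 w a :=
        Finset.sum_le_sum_of_subset_of_nonneg (Finset.filter_subset _ _) fun n _ _ =>
          mul_nonneg (hw n) (rate_nonneg h (fun m => (hP m).le) hN0 a n)

lemma wsum_le_sum_logb_orderStat_top (hw : ∀ n, 0 ≤ w n) (hP : ∀ n, 0 ≤ P n) (hN0 : 0 < N0)
    (a : Fin N → Fin N) :
    wsum h P N0 w a ≤
      ∑ n, w n * Real.logb 2 (1 + P n / N0 * orderStat (fun k => ‖h n n k‖) N ^ 2) :=
  Finset.sum_le_sum fun n _ =>
    mul_le_mul_of_nonneg_left (rate_le_logb_orderStat_top h hP hN0 a n) (hw n)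

end Game

theorem stmt_7_general {N : ℕ} (h : Fin N → Fin N → Fin N → ℂ) (P : Fin N → ℝ) (N0 : ℝ) (M : ℕ)
    (w : Fin N → ℝ)
    (hP : ∀ n, 0 < P n) (hN0 : 0 < N0)
    (hw : ∀ n, 0 < w n)
    (atil : Fin N → Fin N)
    (hmin : IsPNE (fun b n => mfsigUtil h P N0 M b n) atil ∧
      ∀ b, IsPNE (fun c n => mfsigUtil h P N0 M c n) b → wsum h P N0 w atil ≤ wsum h P N0 w b) :
    (∑ n ∈ Finset.univ.filter (fun n => ¬ ∃ m, m ≠ n ∧ atil m = atil n),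
        w n * Real.logb 2 (1 + P n / N0 * orderStat (fun k => ‖h n n k‖) (N - M + 1) ^ 2)) /
      (∑ n, w n * Real.logb 2 (1 + P n / N0 * orderStat (fun k => ‖h n n k‖) N ^ 2))
    ≤ wsum h P N0 w atil / (⨆ b : Fin N → Fin N, wsum h P N0 w b) := by
  have hw0 : ∀ n, 0 ≤ w n := fun n => (hw n).le
  have hP0 : ∀ n, 0 ≤ P n := fun n => (hP n).le
  have : Nonempty (Fin N → Fin N) := ⟨id⟩
  refine div_le_div_of_le_of_le_of_le ?_ (sum_not_sharing_le_wsum_of_isPNE h hw0 hP hN0 hmin.1)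
    (le_ciSup (Set.finite_range _).bddAbove atil)
    (ciSup_le (wsum_le_sum_logb_orderStat_top h hw0 hP0 hN0))
  refine Finset.sum_nonneg fun n _ => mul_nonneg (hw0 n) (Real.logb_nonneg one_lt_two ?_)
  exact le_add_of_nonneg_right (mul_nonneg (div_nonneg (hP0 n) hN0.le) (sq_nonneg _))

/-- deterministic lower bound on the inverse pure price of anarchy of the M-FSIG
in terms of the non-sharing users of a worst pure Nash equilibrium. -/
theorem stmt_7 {N : ℕ} (h : Fin N → Fin N → Fin N → ℂ) (P : Fin N → ℝ) (N0 : ℝ) (M : ℕ)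
    (w : Fin N → ℝ)
    (hh : ∀ m n k, 0 < ‖h m n k‖) (hP : ∀ n, 0 < P n) (hN0 : 0 < N0)
    (hw : ∀ n, 0 < w n)
    (atil : Fin N → Fin N)
    (hmin : IsPNE (fun b n => mfsigUtil h P N0 M b n) atil ∧
      ∀ b, IsPNE (fun c n => mfsigUtil h P N0 M c n) b → wsum h P N0 w atil ≤ wsum h P N0 w b) :
    (∑ n ∈ Finset.univ.filter (fun n => ¬ ∃ m, m ≠ n ∧ atil m = atil n),
        w n * Real.logb 2 (1 + P n / N0 * orderStat (fun k => ‖h n n k‖) (N - M + 1) ^ 2)) /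
      (∑ n, w n * Real.logb 2 (1 + P n / N0 * orderStat (fun k => ‖h n n k‖) N ^ 2))
    ≤ wsum h P N0 w atil / (⨆ b : Fin N → Fin N, wsum h P N0 w b) :=
  stmt_7_general h P N0 M w hP hN0 hw atil hmin
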